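/- Let P ∈ ℝ³ with ‖P‖ ≤ 1, let ε > 0, and let θ̄, φ̄, θ, φ ∈ ℝ with |θ̄ − θ| ≤ ε and |φ̄ − φ| ≤ ε. If ⟨X(θ̄,φ̄), P⟩ > √2·ε, then ⟨X(θ,φ), P⟩ > 0. -/

import Mathlib

/-!
Moving the angles by at most `ε` moves `X` by at most `√2 ε`: the chord length satisfies
`‖X θ' φ' - X θ φ‖² = 2(1 - cos Δφ) + 2 sin φ' sin φ (1 - cos Δθ) ≤ Δφ² + Δθ²`.
Since `‖P‖ ≤ 1`, Cauchy–Schwarz then changes `⟪X, P⟫` by at most `√2 ε`.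
-/

noncomputable section

open Real

/-- A matrix acting on Euclidean space. -/
def act {m n : ℕ} (A : Matrix (Fin m) (Fin n) ℝ) (v : EuclideanSpace ℝ (Fin n)) :
    EuclideanSpace ℝ (Fin m) :=
  Matrix.toEuclideanLin A v

/-- Operator norm of a real matrix with respect to the Euclidean norms. -/
def opNorm {m n : ℕ} (A : Matrix (Fin m) (Fin n) ℝ) : ℝ :=
  ‖LinearMap.toContinuousLinearMap (Matrix.toEuclideanLin A)‖

/-- The 2×2 rotation matrix by angle `α`. -/
def R (α : ℝ) : Matrix (Fin 2) (Fin 2) ℝ :=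
  !![cos α, -sin α; sin α, cos α]

/-- The orthogonal projection matrix in direction `X θ φ`. -/
def M (θ φ : ℝ) : Matrix (Fin 2) (Fin 3) ℝ :=
  !![-sin θ, cos θ, 0; -cos θ * cos φ, -sin θ * cos φ, sin φ]

/-- The unit vector parametrized by spherical coordinates. -/
def X (θ φ : ℝ) : EuclideanSpace ℝ (Fin 3) :=
  (WithLp.equiv 2 (Fin 3 → ℝ)).symm ![cos θ * sin φ, sin θ * sin φ, cos φ]

/-- Rotation about the x-axis. -/
def Rx (α : ℝ) : Matrix (Fin 3) (Fin 3) ℝ :=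
  !![1, 0, 0; 0, cos α, -sin α; 0, sin α, cos α]

/-- Rotation about the y-axis. -/
def Ry (α : ℝ) : Matrix (Fin 3) (Fin 3) ℝ :=
  !![cos α, 0, -sin α; 0, 1, 0; sin α, 0, cos α]

/-- Rotation about the z-axis. -/
def Rz (α : ℝ) : Matrix (Fin 3) (Fin 3) ℝ :=
  !![cos α, -sin α, 0; sin α, cos α, 0; 0, 0, 1]

open scoped RealInnerProductSpace

lemma norm_X_sub_X_sq (θ' φ' θ φ : ℝ) :
    ‖X θ' φ' - X θ φ‖ ^ 2 =
      2 * (1 - cos (φ' - φ)) + 2 * sin φ' * sin φ * (1 - cos (θ' - θ)) := by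
  simp only [EuclideanSpace.real_norm_sq_eq, Fin.sum_univ_three, PiLp.sub_apply, X,
    WithLp.equiv_symm_apply, Matrix.cons_val_zero, Matrix.cons_val_one,
    Matrix.cons_val_two, Matrix.head_cons, Matrix.tail_cons, cos_sub]
  linear_combination sin φ' ^ 2 * sin_sq_add_cos_sq θ' + sin φ ^ 2 * sin_sq_add_cos_sq θ
    + sin_sq_add_cos_sq φ' + sin_sq_add_cos_sq φ

lemma norm_X_sub_X_sq_le (θ' φ' θ φ : ℝ) :
    ‖X θ' φ' - X θ φ‖ ^ 2 ≤ (θ' - θ) ^ 2 + (φ' - φ) ^ 2 := by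
  have hθ := one_sub_sq_div_two_le_cos (x := θ' - θ)
  have hφ := one_sub_sq_div_two_le_cos (x := φ' - φ)
  have hsin : sin φ' * sin φ ≤ 1 := (abs_le.1 <| (abs_mul _ _).trans_le <|
    mul_le_one₀ (abs_sin_le_one _) (abs_nonneg _) (abs_sin_le_one _)).2
  have hcos : 0 ≤ 1 - cos (θ' - θ) := sub_nonneg.2 (cos_le_one _)
  rw [norm_X_sub_X_sq]
  nlinarith

lemma norm_X_sub_X_le {ε θ' φ' θ φ : ℝ} (hθ : |θ' - θ| ≤ ε) (hφ : |φ' - φ| ≤ ε) :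
    ‖X θ' φ' - X θ φ‖ ≤ √2 * ε := by
  have hε : 0 ≤ ε := (abs_nonneg _).trans hθ
  refine le_of_pow_le_pow_left₀ two_ne_zero (by positivity) ?_
  calc ‖X θ' φ' - X θ φ‖ ^ 2 ≤ (θ' - θ) ^ 2 + (φ' - φ) ^ 2 := norm_X_sub_X_sq_le ..
    _ ≤ ε ^ 2 + ε ^ 2 :=
      add_le_add (sq_le_sq' (abs_le.1 hθ).1 (abs_le.1 hθ).2)
        (sq_le_sq' (abs_le.1 hφ).1 (abs_le.1 hφ).2)
    _ = (√2 * ε) ^ 2 := by rw [mul_pow, sq_sqrt zero_le_two]; ring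

lemma sub_norm_sub_le_inner {E : Type*} [NormedAddCommGroup E] [InnerProductSpace ℝ E]
    {x y P : E} (hP : ‖P‖ ≤ 1) : ⟪x, P⟫ - ‖x - y‖ ≤ ⟪y, P⟫ := by
  have : ⟪x - y, P⟫ ≤ ‖x - y‖ :=
    calc ⟪x - y, P⟫ ≤ ‖x - y‖ * ‖P‖ := real_inner_le_norm _ _
      _ ≤ ‖x - y‖ := mul_le_of_le_one_right (norm_nonneg _) hP
  rw [inner_sub_left] at this
  linarith

theorem inner_X_pos_general (P : EuclideanSpace ℝ (Fin 3)) (hP : ‖P‖ ≤ 1)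
    (ε θ' φ' θ φ : ℝ) (hθ : |θ' - θ| ≤ ε) (hφ : |φ' - φ| ≤ ε)
    (h : ⟪X θ' φ', P⟫ > Real.sqrt 2 * ε) :
    ⟪X θ φ, P⟫ > 0 := by
  linarith [norm_X_sub_X_le hθ hφ, sub_norm_sub_le_inner (x := X θ' φ') (y := X θ φ) hP]

/-- Positivity of the inner product with the projection direction is stable under
perturbation of the angles. -/
theorem inner_X_pos (P : EuclideanSpace ℝ (Fin 3)) (hP : ‖P‖ ≤ 1)
    (ε θ' φ' θ φ : ℝ) (hε : 0 < ε) (hθ : |θ' - θ| ≤ ε) (hφ : |φ' - φ| ≤ ε)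
    (h : ⟪X θ' φ', P⟫ > Real.sqrt 2 * ε) :
    ⟪X θ φ, P⟫ > 0 :=
  inner_X_pos_general P hP ε θ' φ' θ φ hθ hφ h
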